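/- Let A be a ℂ-algebra and D₁, D₂ : A → A linear maps. For a linear map D, define the operator 𝑏_D on A^{⊗(n+1)} (n ≥ 1) by 𝑏_D(a⁰ ⊗ ⋯ ⊗ aⁿ) = (−1)ⁿ D(aⁿ)a⁰ ⊗ a¹ ⊗ ⋯ ⊗ a^{n−1}, and for a bilinear map T : A × A → A define 𝑏_T on A^{⊗(n+1)} (n ≥ 2) by 𝑏_T(a⁰ ⊗ ⋯ ⊗ aⁿ) = T(a^{n−1}, aⁿ)a⁰ ⊗ a¹ ⊗ ⋯ ⊗ a^{n−2}. Then for all n ≥ 2, the commutator satisfies 𝑏_{D₁} ∘ 𝑏_{D₂} − 𝑏_{D₂} ∘ 𝑏_{D₁} = 𝑏_T on A^{⊗(n+1)}, where T(x, y) = D₂(x)D₁(y) − D₁(x)D₂(y). -/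
import Mathlib


open scoped TensorProduct

/-- The tuple-level action of the interior product `𝑏_D` of a 1-cochain `D` on elementary
tensors of `A^{⊗(k+1)}`: `𝑏_D(a⁰ ⊗ ⋯ ⊗ a^k) = (−1)^k D(a^k)a⁰ ⊗ a¹ ⊗ ⋯ ⊗ a^{k-1}`
(the scalar `(−1)^k` is absorbed into the 0-th entry). -/
noncomputable def bOp {A : Type} [Ring A] [Algebra ℂ A] (D : A →ₗ[ℂ] A) (k : ℕ)
    (a : Fin (k + 1) → A) : Fin k → A := fun i =>
  if i.val = 0 then ((-1 : ℂ) ^ k) • (D (a (Fin.last k)) * a 0) else a i.castSucc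

/-- The tuple-level action of the interior product `𝑏_T` of a 2-cochain `T` on elementary
tensors of `A^{⊗(k+2)}`: `𝑏_T(a⁰ ⊗ ⋯ ⊗ a^{k+1}) = (−1)^{2(k+1)} T(a^k, a^{k+1})a⁰ ⊗ a¹ ⊗ ⋯`,
and `(−1)^{2(k+1)} = 1`. -/
noncomputable def bOp₂ {A : Type} [Ring A] [Algebra ℂ A] (T : A → A → A) (k : ℕ)
    (a : Fin (k + 2) → A) : Fin k → A := fun i =>
  if i.val = 0 then T (a ⟨k, by omega⟩) (a ⟨k + 1, by omega⟩) * a 0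
  else a ⟨i.val, by omega⟩

lemma bOp_comp {A : Type} [Ring A] [Algebra ℂ A] (D₁ D₂ : A →ₗ[ℂ] A) (T : A → A → A)
    (N : ℕ) (a : Fin (N + 2 + 1) → A) :
    bOp D₁ (N + 1) (bOp D₂ (N + 2) a)
      = Function.update (bOp₂ T (N + 1) a) 0
          (-(D₁ (a ⟨N + 1, by omega⟩) * (D₂ (a ⟨N + 2, by omega⟩) * a 0))) := by
  funext i
  rcases i with ⟨iv, hi⟩
  rcases Nat.eq_zero_or_pos iv with h0 | hpos
  · subst h0
    have h0' : (⟨0, hi⟩ : Fin (N + 1)) = 0 := rfl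
    rw [h0', Function.update_self]
    show ((-1 : ℂ) ^ (N + 1)) •
        (D₁ (bOp D₂ (N + 2) a (Fin.last (N + 1))) * bOp D₂ (N + 2) a 0) = _
    have hlast : bOp D₂ (N + 2) a (Fin.last (N + 1)) = a ⟨N + 1, by omega⟩ := by
      simp [bOp, Fin.last, Fin.castSucc, Fin.castAdd, Fin.castLE]
    have h0v : bOp D₂ (N + 2) a 0
        = ((-1 : ℂ) ^ (N + 2)) • (D₂ (a (Fin.last (N + 2))) * a 0) := by
      simp [bOp]
    rw [hlast, h0v]
    have hlast2 : (Fin.last (N + 2) : Fin (N + 3)) = ⟨N + 2, by omega⟩ := rfl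
    rw [hlast2, mul_smul_comm, smul_smul, ← pow_add]
    have hodd : Odd (N + 1 + (N + 2)) := ⟨N + 1, by omega⟩
    rw [hodd.neg_one_pow, neg_one_smul]
  · have hne : (⟨iv, hi⟩ : Fin (N + 1)) ≠ 0 := by
      simp [Fin.ext_iff]; omega
    rw [Function.update_of_ne hne]
    simp only [bOp, bOp₂, Fin.coe_castSucc]
    rw [if_neg (by omega), if_neg (by omega), if_neg (by omega)]
    rfl

/-- for linear maps `D₁, D₂ : A → A`, on `A^{⊗(n+1)}` (any `n ≥ 2`,
here `n = N + 2`) one has `𝑏_{D₁}∘𝑏_{D₂} − 𝑏_{D₂}∘𝑏_{D₁} = 𝑏_T`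
with `T(x,y) = D₂(x)D₁(y) − D₁(x)D₂(y)`.  The identity is stated on elementary tensors,
which span the tensor power. -/
theorem stmt_13 (A : Type) [Ring A] [Algebra ℂ A] (D₁ D₂ : A →ₗ[ℂ] A)
    (N : ℕ) (a : Fin (N + 2 + 1) → A) :
    PiTensorProduct.tprod ℂ (bOp D₁ (N + 1) (bOp D₂ (N + 2) a))
      - PiTensorProduct.tprod ℂ (bOp D₂ (N + 1) (bOp D₁ (N + 2) a))
      = PiTensorProduct.tprod ℂ
          (bOp₂ (fun x y => D₂ x * D₁ y - D₁ x * D₂ y) (N + 1) a) := by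
  set T : A → A → A := fun x y => D₂ x * D₁ y - D₁ x * D₂ y with hT
  set g := bOp₂ T (N + 1) a with hg
  rw [hg, bOp_comp D₁ D₂ T N a, bOp_comp D₂ D₁ T N a, ← MultilinearMap.map_update_sub]
  have hval : (-(D₁ (a ⟨N + 1, by omega⟩) * (D₂ (a ⟨N + 2, by omega⟩) * a 0))
      - -(D₂ (a ⟨N + 1, by omega⟩) * (D₁ (a ⟨N + 2, by omega⟩) * a 0)))
      = bOp₂ T (N + 1) a 0 := by
    show _ = T (a ⟨N + 1, by omega⟩) (a ⟨N + 2, by omega⟩) * a 0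
    rw [hT]
    simp only [sub_mul, mul_assoc]
    abel
  rw [hval, Function.update_eq_self]
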